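/- arXiv:1904.08830 — 3 statements merged into one kernel-verified Lean document; each statement's English description precedes it below -/
import Mathlib

section
/- Let f : ℝ×S¹×ℝ → ℝ be smooth and ψ ∈ L²(S¹,ℝ). Then for each fixed t ∈ ℝ the functional F_t : L²(S¹,ℂ) → ℝ is Fréchet differentiable, and its derivative at u ∈ L²(S¹,ℂ) in direction v ∈ L²(S¹,ℂ) is D F_t(u)v = −∫₀^{2π} ∂₁f(|(u*ψ)(x)|²,x,t)·Re( (u*ψ)(x)·conj((v*ψ)(x)) ) dx, where ∂₁f denotes the partial derivative of f with respect to its first variable. -/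
open MeasureTheory Complex
open scoped InnerProductSpace ComplexConjugate Topology

set_option maxHeartbeats 1000000
set_option synthInstance.maxHeartbeats 100000

noncomputable section

instance : Fact (0 < 2 * Real.pi) := ⟨by positivity⟩

/-- The circle `S¹ = ℝ/2πℤ`, with its Lebesgue measure of total mass `2π`. -/
abbrev SC := AddCircle (2 * Real.pi)

/-- Convolution of two complex-valued functions on the circle:
`(u * v)(x) = ∫₀^{2π} u(y) v(x−y) dy`. -/
def conv (u v : SC → ℂ) : SC → ℂ := fun x => ∫ y, u y * v (x - y)

/-- Complexification of a real-valued function on the circle. -/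
def cplx (ψ : SC → ℝ) : SC → ℂ := fun x => (ψ x : ℂ)

/-- The `L²`-norm of a complex-valued function on the circle. -/
def l2norm (u : SC → ℂ) : ℝ := (∫ x, ‖u x‖ ^ 2) ^ ((1 : ℝ) / 2)

/-- The `n`-th Fourier coefficient `û(n) = (2π)^{−1/2} ∫₀^{2π} u(x) e^{−inx} dx`. -/
def fc (u : SC → ℂ) (n : ℤ) : ℂ :=
  (Real.sqrt (2 * Real.pi) : ℂ)⁻¹ * ∫ x, u x * (starRingEnd ℂ) (fourier n x)

/-- The Fourier truncation `u^k(x) = (2π)^{−1/2} Σ_{|n|≤k} û(n) e^{inx}`. -/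
def trunc (u : SC → ℂ) (k : ℕ) : SC → ℂ := fun x =>
  (Real.sqrt (2 * Real.pi) : ℂ)⁻¹ * ∑ n ∈ Finset.Icc (-(k : ℤ)) (k : ℤ), fc u n * fourier n x

/-! ### Auxiliary material -/

/-- The `L²` space on the circle. -/
abbrev Hs := Lp ℂ 2 (volume : Measure SC)

/-- The map `y ↦ x - y` as a continuous map. -/
def shiftCM (x : SC) : C(SC, SC) := ⟨fun y => x - y, continuous_const.sub continuous_id⟩

lemma shift_mp (x : SC) : MeasurePreserving (shiftCM x) (volume : Measure SC) volume :=
  Measure.measurePreserving_sub_left volume x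

/-- Translation-reflection of an `L²` function. -/
def wf (g : Hs) (x : SC) : Hs := Lp.compMeasurePreserving (shiftCM x) (shift_mp x) g

lemma wf_coeFn (g : Hs) (x : SC) :
    wf g x =ᵐ[volume] (g : SC → ℂ) ∘ (shiftCM x) :=
  Lp.coeFn_compMeasurePreserving g (shift_mp x)

lemma wf_norm (g : Hs) (x : SC) : ‖wf g x‖ = ‖g‖ :=
  Lp.norm_compMeasurePreserving g (shift_mp x)

lemma wf_cont (g : Hs) : Continuous (wf g) := by
  refine Continuous.compMeasurePreservingLp continuous_const ?_ shift_mp (by simp)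
  exact ContinuousMap.continuous_of_continuous_uncurry _ (continuous_fst.sub continuous_snd)

/-- The convolution functional as an `ℝ`-linear continuous map. -/
def Lx (g : Hs) (x : SC) : Hs →L[ℝ] ℂ := (innerSL ℂ (wf g x)).restrictScalars ℝ

lemma Lx_apply (g v : Hs) (x : SC) : Lx g x v = ⟪wf g x, v⟫_ℂ := rfl

lemma lip_innerSL :
    LipschitzWith 1 (fun g : Hs => ((innerSL ℂ g).restrictScalars ℝ : Hs →L[ℝ] ℂ)) := by
  refine LipschitzWith.of_dist_le_mul fun g₁ g₂ => ?_
  simp only [dist_eq_norm, NNReal.coe_one, one_mul]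
  refine ContinuousLinearMap.opNorm_le_bound _ (norm_nonneg _) fun h => ?_
  have he : ((innerSL ℂ g₁).restrictScalars ℝ - (innerSL ℂ g₂).restrictScalars ℝ) h
      = ⟪g₁ - g₂, h⟫_ℂ := by
    simp [inner_sub_left]
  rw [he]
  exact norm_inner_le_norm _ _

lemma Lx_cont (g : Hs) : Continuous (Lx g) :=
  lip_innerSL.continuous.comp (wf_cont g)

lemma Lx_norm_le (g : Hs) (x : SC) : ‖Lx g x‖ ≤ ‖g‖ := by
  rw [Lx, ContinuousLinearMap.norm_restrictScalars, innerSL_apply_norm, wf_norm]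

lemma Lx_apply_norm_le (g v : Hs) (x : SC) : ‖Lx g x v‖ ≤ ‖g‖ * ‖v‖ :=
  le_trans ((Lx g x).le_opNorm v)
    (mul_le_mul_of_nonneg_right (Lx_norm_le g x) (norm_nonneg v))

/-- Representation of the convolution as an inner product. -/
lemma conv_rep (ψ : SC → ℝ) (g : Hs) (hg : (g : SC → ℂ) =ᵐ[volume] cplx ψ)
    (v : Hs) (x : SC) : conv (↑v) (cplx ψ) x = Lx g x v := by
  have h1 := wf_coeFn g x
  have h2 : ((g : SC → ℂ) ∘ (shiftCM x)) =ᵐ[volume] ((cplx ψ) ∘ (shiftCM x)) :=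
    (shift_mp x).quasiMeasurePreserving.ae_eq_comp hg
  rw [Lx_apply]
  show (∫ y, (v : SC → ℂ) y * cplx ψ (x - y)) = _
  rw [MeasureTheory.L2.inner_def]
  refine (integral_congr_ae ?_).symm
  filter_upwards [h1, h2] with y hy1 hy2
  have hw : (wf g x : SC → ℂ) y = cplx ψ (x - y) := by
    rw [hy1, hy2]
    simp [shiftCM, cplx]
  rw [RCLike.inner_apply, hw]
  simp [cplx, Complex.conj_ofReal, mul_comm]

/-- Canonical representative in `[0, 2π)` of a point on the circle. -/
def Q (x : SC) : ℝ := (AddCircle.equivIco (2 * Real.pi) 0 x : ℝ)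

lemma Q_coe (x : SC) : ((Q x : ℝ) : SC) = x :=
  (AddCircle.equivIco (2 * Real.pi) 0).symm_apply_apply x

lemma Q_mem (x : SC) : Q x ∈ Set.Icc (0 : ℝ) (2 * Real.pi) := by
  obtain ⟨h1, h2⟩ := (AddCircle.equivIco (2 * Real.pi) 0 x).2
  have hh : Q x < 0 + 2 * Real.pi := h2
  exact ⟨h1, by linarith⟩

lemma Q_meas : Measurable Q :=
  measurable_subtype_coe.comp (AddCircle.measurableEquivIco (2 * Real.pi) 0).measurable

/-- For smooth `f` (given on the circle as the periodic quotient of a smooth function `F` on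
`ℝ×ℝ×ℝ`), the nonlinearity Hamiltonian `F_t` is Fréchet differentiable on `L²(S¹,ℂ)`, with
`DF_t(u)v = −∫ ∂₁f(|(u*ψ)(x)|²,x,t)·Re((u*ψ)(x)·conj((v*ψ)(x))) dx`. -/
theorem hamiltonian_hasFDerivAt (F : ℝ × ℝ × ℝ → ℝ) (hF : ContDiff ℝ (⊤ : ℕ∞) F)
    (f : ℝ → SC → ℝ → ℝ)
    (hf : ∀ (w x t : ℝ), f w (x : SC) t = F (w, x, t))
    (ψ : SC → ℝ) (hψ : MemLp ψ 2 volume) (t : ℝ)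
    (u : Lp ℂ 2 (volume : Measure SC)) :
    ∃ D : Lp ℂ 2 (volume : Measure SC) →L[ℝ] ℝ,
      HasFDerivAt (fun v : Lp ℂ 2 (volume : Measure SC) =>
          -(1/2 : ℝ) * ∫ x, f (‖conv (↑v) (cplx ψ) x‖ ^ 2) x t) D u ∧
      ∀ v : Lp ℂ 2 (volume : Measure SC),
        D v = -∫ x, deriv (fun w => f w x t) (‖conv (↑u) (cplx ψ) x‖ ^ 2) *
          (conv (↑u) (cplx ψ) x * (starRingEnd ℂ) (conv (↑v) (cplx ψ) x)).re := by
  classical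
  have hψC : MemLp (cplx ψ) 2 (volume : Measure SC) := hψ.ofReal
  set g₀ : Hs := hψC.toLp (cplx ψ) with hg₀
  have hg : (g₀ : SC → ℂ) =ᵐ[volume] cplx ψ := hψC.coeFn_toLp
  set L : SC → Hs →L[ℝ] ℂ := fun x => Lx g₀ x with hLdef
  have hrep : ∀ (v : Hs) (x : SC), conv (↑v) (cplx ψ) x = L x v :=
    fun v x => conv_rep ψ g₀ hg v x
  -- rewrite f through F
  have hfQ : ∀ (w : ℝ) (x : SC), f w x t = F (w, Q x, t) := by
    intro w x
    calc f w x t = f w ((Q x : ℝ) : SC) t := by rw [Q_coe]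
    _ = F (w, Q x, t) := hf w (Q x) t
  -- partial derivative of F in the first variable
  set p1 : ℝ → ℝ → ℝ := fun a b => fderiv ℝ F (a, b, t) (1, 0, 0) with hp1
  have hDeriv : ∀ (a b : ℝ), HasDerivAt (fun w => F (w, b, t)) (p1 a b) a := by
    intro a b
    have h1 : HasDerivAt (fun w : ℝ => (w, b, t)) ((1 : ℝ), (0 : ℝ), (0 : ℝ)) a :=
      (hasDerivAt_id a).prodMk ((hasDerivAt_const a b).prodMk (hasDerivAt_const a t))
    exact ((hF.differentiable (by simp)) (a, b, t)).hasFDerivAt.comp_hasDerivAt a h1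
  have hderiv_eq : ∀ (x : SC) (a : ℝ), deriv (fun w => f w x t) a = p1 a (Q x) := by
    intro x a
    have hfe : (fun w => f w x t) = fun w => F (w, Q x, t) := funext fun w => hfQ w x
    rw [hfe]
    exact (hDeriv a (Q x)).deriv
  -- derivative candidate
  set F' : Hs → SC → (Hs →L[ℝ] ℝ) := fun v x =>
    p1 (‖L x v‖ ^ 2) (Q x) • ((2 : ℕ) • (innerSL ℝ (L x v)).comp (L x)) with hF'def
  -- pointwise differentiability
  have hdiff : ∀ (x : SC) (v : Hs),
      HasFDerivAt (fun v' : Hs => f (‖conv (↑v') (cplx ψ) x‖ ^ 2) x t) (F' v x) v := by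
    intro x v
    have hfun : (fun v' : Hs => f (‖conv (↑v') (cplx ψ) x‖ ^ 2) x t)
        = fun v' => F (‖L x v'‖ ^ 2, Q x, t) := by
      funext v'
      rw [hrep v' x, hfQ]
    rw [hfun]
    have hL : HasFDerivAt (L x) (L x) v := (L x).hasFDerivAt
    have hN : HasFDerivAt (fun v' => ‖L x v'‖ ^ 2)
        ((2 : ℕ) • (innerSL ℝ (L x v)).comp (L x)) v := hL.norm_sq
    exact (hDeriv (‖L x v‖ ^ 2) (Q x)).comp_hasFDerivAt v hN
  -- continuity facts
  have hLcont : Continuous L := Lx_cont g₀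
  have hccont : ∀ v : Hs, Continuous fun x => L x v := fun v =>
    ((ContinuousLinearMap.apply ℝ ℂ : Hs →L[ℝ] (Hs →L[ℝ] ℂ) →L[ℝ] ℂ) v).continuous.comp hLcont
  -- compact bounds
  set R : ℝ := ‖g₀‖ * (‖u‖ + 1) with hRdef
  have hR0 : (0 : ℝ) ≤ R := by positivity
  set K : Set (ℝ × ℝ) := Set.Icc (0 : ℝ) (R ^ 2) ×ˢ Set.Icc (0 : ℝ) (2 * Real.pi) with hKdef
  have hK : IsCompact K := isCompact_Icc.prod isCompact_Icc
  have hp1cont : Continuous fun q : ℝ × ℝ => p1 q.1 q.2 := by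
    have h1 : Continuous fun q : ℝ × ℝ => (q.1, q.2, t) := by fun_prop
    have h2 : Continuous (fderiv ℝ F) := hF.continuous_fderiv (by simp)
    exact ((ContinuousLinearMap.apply ℝ ℝ :
        (ℝ × ℝ × ℝ) →L[ℝ] ((ℝ × ℝ × ℝ) →L[ℝ] ℝ) →L[ℝ] ℝ)
        ((1 : ℝ), (0 : ℝ), (0 : ℝ))).continuous.comp (h2.comp h1)
  have hFcont : Continuous fun q : ℝ × ℝ => F (q.1, q.2, t) := by
    have h1 : Continuous fun q : ℝ × ℝ => (q.1, q.2, t) := by fun_prop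
    exact hF.continuous.comp h1
  obtain ⟨M, hM⟩ := hK.exists_bound_of_continuousOn hp1cont.continuousOn
  obtain ⟨M₂, hM₂⟩ := hK.exists_bound_of_continuousOn hFcont.continuousOn
  have hM0 : (0 : ℝ) ≤ M := by
    have h0K : ((0 : ℝ), (0 : ℝ)) ∈ K := by
      refine ⟨⟨le_refl _, by positivity⟩, ⟨le_refl _, by positivity⟩⟩
    exact le_trans (norm_nonneg _) (hM _ h0K)
  have hmem : ∀ (x : SC) (v : Hs), ‖v‖ ≤ ‖u‖ + 1 → (‖L x v‖ ^ 2, Q x) ∈ K := by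
    intro x v hv
    constructor
    · refine ⟨by positivity, ?_⟩
      have h1 : ‖L x v‖ ≤ R := by
        refine le_trans (Lx_apply_norm_le g₀ v x) ?_
        exact mul_le_mul_of_nonneg_left hv (norm_nonneg g₀)
      exact pow_le_pow_left₀ (norm_nonneg _) h1 2
    · exact Q_mem x
  -- uniform bound on the derivative over a ball
  set bd : ℝ := M * (2 * (R * ‖g₀‖)) with hbd
  have hFdbound : ∀ (x : SC), ∀ v ∈ Metric.ball u 1, ‖F' v x‖ ≤ bd := by
    intro x v hv
    have hvn : ‖v‖ ≤ ‖u‖ + 1 := by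
      have h1 : ‖v - u‖ < 1 := mem_ball_iff_norm.mp hv
      have h2 : ‖v‖ - ‖u‖ ≤ ‖v - u‖ := norm_sub_norm_le v u
      linarith
    have hKm := hmem x v hvn
    have h1 : ‖p1 (‖L x v‖ ^ 2) (Q x)‖ ≤ M := hM _ hKm
    have hLv : ‖L x v‖ ≤ R :=
      le_trans (Lx_apply_norm_le g₀ v x) (mul_le_mul_of_nonneg_left hvn (norm_nonneg g₀))
    have h2 : ‖(2 : ℕ) • (innerSL ℝ (L x v)).comp (L x)‖ ≤ 2 * (R * ‖g₀‖) := by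
      refine le_trans norm_nsmul_le ?_
      have h3 : ‖(innerSL ℝ (L x v)).comp (L x)‖ ≤ R * ‖g₀‖ := by
        refine le_trans (ContinuousLinearMap.opNorm_comp_le _ _) ?_
        have h4 : ‖innerSL ℝ (L x v)‖ ≤ R := by
          rw [innerSL_apply_norm]; exact hLv
        exact mul_le_mul h4 (Lx_norm_le g₀ x) (norm_nonneg _) (le_trans (norm_nonneg _) h4)
      simpa using mul_le_mul_of_nonneg_left h3 (by norm_num : (0:ℝ) ≤ 2)
    calc ‖F' v x‖ ≤ ‖p1 (‖L x v‖ ^ 2) (Q x)‖ * ‖(2 : ℕ) • (innerSL ℝ (L x v)).comp (L x)‖ := by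
          rw [hF'def]
          exact (norm_smul (p1 (‖L x v‖ ^ 2) (Q x)) ((2 : ℕ) • (innerSL ℝ (L x v)).comp (L x))).le
    _ ≤ M * (2 * (R * ‖g₀‖)) := mul_le_mul h1 h2 (norm_nonneg _) hM0
  -- measurability of the derivative at u
  have hF'meas : AEStronglyMeasurable (F' u) (volume : Measure SC) := by
    have hm0 : Measurable fun x : SC => (‖L x u‖ ^ 2, Q x) :=
      (((hccont u).norm.pow 2).measurable).prodMk Q_meas
    have hsmeas : Measurable fun x => p1 (‖L x u‖ ^ 2) (Q x) :=
      hp1cont.measurable.comp hm0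
    have hinner : Continuous fun x => innerSL ℝ (L x u) :=
      (innerSL ℝ).continuous.comp (hccont u)
    have hA : Continuous fun x => (innerSL ℝ (L x u)).comp (L x) :=
      isBoundedBilinearMap_comp.continuous.comp (hinner.prodMk hLcont)
    have h2A : Continuous fun x => (2 : ℕ) • (innerSL ℝ (L x u)).comp (L x) := by
      simpa [two_smul] using (show Continuous fun x => (innerSL ℝ (L x u)).comp (L x) + (innerSL ℝ (L x u)).comp (L x) from hA.add hA)
    exact hsmeas.aestronglyMeasurable.smul h2A.aestronglyMeasurable
  -- measurability and integrability of the integrand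
  have hΦeq : ∀ (v : Hs) (x : SC),
      f (‖conv (↑v) (cplx ψ) x‖ ^ 2) x t = F (‖L x v‖ ^ 2, Q x, t) := by
    intro v x
    rw [hrep v x, hfQ]
  have hΦmeas : ∀ v : Hs,
      AEStronglyMeasurable (fun x => f (‖conv (↑v) (cplx ψ) x‖ ^ 2) x t)
        (volume : Measure SC) := by
    intro v
    have hm1 : Measurable fun x : SC => (‖L x v‖ ^ 2, Q x, t) :=
      (((hccont v).norm.pow 2).measurable).prodMk (Q_meas.prodMk measurable_const)
    have hm : Measurable fun x => F (‖L x v‖ ^ 2, Q x, t) :=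
      hF.continuous.measurable.comp hm1
    have he : (fun x => f (‖conv (↑v) (cplx ψ) x‖ ^ 2) x t)
        = fun x => F (‖L x v‖ ^ 2, Q x, t) := funext (hΦeq v)
    rw [he]
    exact hm.aestronglyMeasurable
  have hΦint : Integrable (fun x => f (‖conv (↑u) (cplx ψ) x‖ ^ 2) x t)
      (volume : Measure SC) := by
    refine Integrable.mono' (integrable_const M₂) (hΦmeas u) ?_
    refine Filter.Eventually.of_forall fun x => ?_
    rw [hΦeq]
    exact hM₂ _ (hmem x u (by linarith [norm_nonneg u]))
  -- apply differentiation under the integral sign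
  have main := hasFDerivAt_integral_of_dominated_of_fderiv_le (𝕜 := ℝ)
      (μ := (volume : Measure SC))
      (F := fun (v : Hs) x => f (‖conv (↑v) (cplx ψ) x‖ ^ 2) x t) (F' := F')
      (bound := fun _ => bd) (x₀ := u) (Metric.ball_mem_nhds u zero_lt_one)
      (Filter.Eventually.of_forall hΦmeas) hΦint hF'meas
      (Filter.Eventually.of_forall fun x v hv => hFdbound x v hv)
      (integrable_const bd)
      (Filter.Eventually.of_forall fun x v _ => hdiff x v)
  have hF'int : Integrable (F' u) (volume : Measure SC) :=
    Integrable.mono' (integrable_const bd) hF'meas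
      (Filter.Eventually.of_forall fun x => hFdbound x u (Metric.mem_ball_self one_pos))
  refine ⟨(-(1/2 : ℝ)) • (∫ x, F' u x), main.const_mul (-(1/2 : ℝ)), ?_⟩
  intro v
  rw [ContinuousLinearMap.smul_apply, ContinuousLinearMap.integral_apply hF'int]
  have hpt : ∀ x : SC, F' u x v
      = 2 * (deriv (fun w => f w x t) (‖conv (↑u) (cplx ψ) x‖ ^ 2) *
          (conv (↑u) (cplx ψ) x * (starRingEnd ℂ) (conv (↑v) (cplx ψ) x)).re) := by
    intro x
    have h1 : F' u x v
        = p1 (‖L x u‖ ^ 2) (Q x) * (2 * ((starRingEnd ℂ) (L x u) * L x v).re) := by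
      rw [hF'def]
      have hI : ((innerSL ℝ (L x u)).comp (L x)) v
          = ((starRingEnd ℂ) (L x u) * L x v).re := by
        simp [Complex.inner]
        ring
      simp [two_smul, hI, mul_add, smul_eq_mul]
      try ring
    rw [h1, hrep u x, hrep v x, hderiv_eq]
    have h2 : ((starRingEnd ℂ) (L x u) * L x v).re
        = (L x u * (starRingEnd ℂ) (L x v)).re := by
      simp [Complex.mul_re]
      try ring
    rw [h2]
    ring
  rw [integral_congr_ae (Filter.Eventually.of_forall hpt), integral_const_mul]
  have : -(1/2 : ℝ) • (2 * ∫ x, deriv (fun w => f w x t) (‖conv (↑u) (cplx ψ) x‖ ^ 2) *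
      (conv (↑u) (cplx ψ) x * (starRingEnd ℂ) (conv (↑v) (cplx ψ) x)).re)
      = -(∫ x, deriv (fun w => f w x t) (‖conv (↑u) (cplx ψ) x‖ ^ 2) *
      (conv (↑u) (cplx ψ) x * (starRingEnd ℂ) (conv (↑v) (cplx ψ) x)).re) := by
    rw [smul_eq_mul]; ring
  exact this
end
end

section
/- Let ψ ∈ L²(S¹,ℝ), ψ̌(x) := ψ(−x), and let h : ℝ×S¹ → ℝ be such that h(t,·) is bounded and measurable for each t. If u : ℝ → L²(S¹,ℂ) is a differentiable curve satisfying u'(t) = −i·( h(t,·)·(u(t)*ψ) )*ψ̌ for all t ∈ ℝ, then the norm ‖u(t)‖₂ is constant in t. -/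
/-! Write `g = u * ψ`. Since `ψ` is real, convolution with `ψ̌` is the adjoint of convolution with
`ψ`, so Fubini gives `⟪u, u'⟫ = -i ∫ h |g|²`, which is purely imaginary; hence
`d/dt ‖u‖² = 2 Re ⟪u, u'⟫ = 0`. Fubini applies because `h` is bounded and so is `g`, pointwise by
`|u(z) ψ(y - z)| ≤ (|u(z)|² + |ψ(y - z)|²) / 2`. -/

open MeasureTheory Complex

noncomputable section

open scoped ComplexConjugate

section InnerProductSpace

variable {𝕜 E : Type*} [RCLike 𝕜] [NormedAddCommGroup E] [InnerProductSpace 𝕜 E]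
  [NormedSpace ℝ E]

theorem norm_eq_of_re_inner_deriv_eq_zero {u u' : ℝ → E} (hu : ∀ t, HasDerivAt u (u' t) t)
    (h : ∀ t, RCLike.re (inner 𝕜 (u t) (u' t)) = 0) (s t : ℝ) : ‖u s‖ = ‖u t‖ := by
  have hderiv : ∀ r, HasDerivAt (fun t => inner 𝕜 (u t) (u t)) 0 r := by
    intro r
    have hsum : inner 𝕜 (u r) (u' r) + inner 𝕜 (u' r) (u r) = 0 := by
      rw [← inner_conj_symm (u' r) (u r), RCLike.add_conj, h r, RCLike.ofReal_zero, mul_zero]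
    simpa only [hsum] using (hu r).inner 𝕜 (hu r)
  have hconst := is_const_of_deriv_eq_zero (fun r => (hderiv r).differentiableAt)
    (fun r => (hderiv r).deriv) s t
  rw [inner_self_eq_norm_sq_to_K, inner_self_eq_norm_sq_to_K] at hconst
  exact (pow_left_inj₀ (norm_nonneg _) (norm_nonneg _) two_ne_zero).1 (by exact_mod_cast hconst)

end InnerProductSpace

section Integral

variable {α 𝕜 : Type*} [MeasurableSpace α] {μ : Measure α} [RCLike 𝕜]

theorem norm_integral_mul_le_of_memLp_two {f g : α → 𝕜} (hf : MemLp f 2 μ) (hg : MemLp g 2 μ) :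
    ‖∫ x, f x * g x ∂μ‖ ≤ ((∫ x, ‖f x‖ ^ 2 ∂μ) + ∫ x, ‖g x‖ ^ 2 ∂μ) / 2 := by
  have hf2 := hf.integrable_norm_pow two_ne_zero
  have hg2 := hg.integrable_norm_pow two_ne_zero
  calc ‖∫ x, f x * g x ∂μ‖ ≤ ∫ x, ‖f x * g x‖ ∂μ := norm_integral_le_integral_norm _
    _ ≤ ∫ x, (‖f x‖ ^ 2 + ‖g x‖ ^ 2) / 2 ∂μ := by
      refine integral_mono_of_nonneg (.of_forall fun x => norm_nonneg _)
        ((hf2.add hg2).div_const 2) (.of_forall fun x => ?_)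
      simp only [norm_mul]
      nlinarith [sq_nonneg (‖f x‖ - ‖g x‖)]
    _ = ((∫ x, ‖f x‖ ^ 2 ∂μ) + ∫ x, ‖g x‖ ^ 2 ∂μ) / 2 := by
      rw [integral_div, integral_add hf2 hg2]

end Integral

section Convolution

variable {G 𝕜 : Type*} [RCLike 𝕜] [MeasurableSpace G] [AddGroup G] [MeasurableNeg G]
  {μ : Measure G}

theorem norm_integral_mul_sub_le [MeasurableAdd G] [μ.IsAddLeftInvariant] [μ.IsNegInvariant]
    {f g : G → 𝕜} (hf : MemLp f 2 μ) (hg : MemLp g 2 μ) (y : G) :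
    ‖∫ z, f z * g (y - z) ∂μ‖ ≤ ((∫ x, ‖f x‖ ^ 2 ∂μ) + ∫ x, ‖g x‖ ^ 2 ∂μ) / 2 := by
  rw [← integral_sub_left_eq_self (fun x => ‖g x‖ ^ 2) μ y]
  exact norm_integral_mul_le_of_memLp_two hf
    (hg.comp_measurePreserving (Measure.measurePreserving_sub_left μ y))

variable [MeasurableAdd₂ G] [SFinite μ] [μ.IsAddRightInvariant]

theorem integral_conj_mul_integral_mul_sub_eq {U F φ : G → 𝕜} (hU : Integrable U μ)
    (hF : AEStronglyMeasurable F μ) {C : ℝ} (hFC : ∀ᵐ y ∂μ, ‖F y‖ ≤ C) (hφ : Integrable φ μ) :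
    ∫ x, conj (U x) * ∫ y, F y * φ (y - x) ∂μ ∂μ
      = ∫ y, F y * conj (∫ x, U x * conj (φ (y - x)) ∂μ) ∂μ := by
  have hconj : Integrable (fun x => conj (U x)) μ := by
    simpa using (RCLike.conjCLE (K := 𝕜)).toContinuousLinearMap.integrable_comp hU
  have hconv : Integrable (fun p : G × G => conj (U p.2) * φ (p.1 - p.2)) (μ.prod μ) :=
    hconj.convolution_integrand (ContinuousLinearMap.mul 𝕜 𝕜) hφ
  have hkernel : Integrable (fun p : G × G => F p.1 * (conj (U p.2) * φ (p.1 - p.2)))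
      (μ.prod μ) :=
    hconv.bdd_mul hF.comp_fst (Measure.quasiMeasurePreserving_fst.ae hFC)
  calc ∫ x, conj (U x) * ∫ y, F y * φ (y - x) ∂μ ∂μ
      = ∫ x, ∫ y, F y * (conj (U x) * φ (y - x)) ∂μ ∂μ := by
        refine integral_congr_ae (.of_forall fun x => ?_)
        simp only [← integral_const_mul]
        congr 1 with y
        ring
    _ = ∫ y, ∫ x, F y * (conj (U x) * φ (y - x)) ∂μ ∂μ :=
        (integral_integral_swap (f := fun y x => F y * (conj (U x) * φ (y - x))) hkernel).symm
    _ = ∫ y, F y * conj (∫ x, U x * conj (φ (y - x)) ∂μ) ∂μ := by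
        refine integral_congr_ae (.of_forall fun y => ?_)
        simp only [← integral_conj, integral_const_mul, map_mul, RCLike.conj_conj]

variable [IsFiniteMeasure μ] [μ.IsAddLeftInvariant] [μ.IsNegInvariant]

theorem integral_conj_mul_hamiltonian_eq_ofReal {U : G → 𝕜} {ψ h : G → ℝ} (hU : MemLp U 2 μ)
    (hψ : MemLp ψ 2 μ) (hh : AEStronglyMeasurable h μ) {C : ℝ} (hhC : ∀ᵐ y ∂μ, |h y| ≤ C) :
    ∫ x, conj (U x) * ∫ y, ((h y : 𝕜) * ∫ z, U z * (ψ (y - z) : 𝕜) ∂μ) * ψ (y - x) ∂μ ∂μ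
      = ((∫ y, h y * ‖∫ z, U z * (ψ (y - z) : 𝕜) ∂μ‖ ^ 2 ∂μ : ℝ) : 𝕜) := by
  set g : G → 𝕜 := fun y => ∫ z, U z * (ψ (y - z) : 𝕜) ∂μ
  have hψ𝕜 : MemLp (fun x => (ψ x : 𝕜)) 2 μ := hψ.ofReal
  have hg_meas : AEStronglyMeasurable g μ :=
    (hU.1.convolution_integrand (ContinuousLinearMap.mul 𝕜 𝕜) hψ𝕜.1).integral_prod_right'
  have hg_bdd := norm_integral_mul_sub_le hU hψ𝕜
  have hF_bdd : ∀ᵐ y ∂μ, ‖(h y : 𝕜) * g y‖ ≤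
      |C| * (((∫ x, ‖U x‖ ^ 2 ∂μ) + ∫ x, ‖(ψ x : 𝕜)‖ ^ 2 ∂μ) / 2) := by
    filter_upwards [hhC] with y hy
    rw [norm_mul, RCLike.norm_ofReal]
    exact mul_le_mul (hy.trans (le_abs_self C)) (hg_bdd y) (norm_nonneg _) (abs_nonneg C)
  rw [integral_conj_mul_integral_mul_sub_eq (F := fun y => (h y : 𝕜) * g y)
    (hU.integrable one_le_two)
    ((RCLike.continuous_ofReal.comp_aestronglyMeasurable hh).mul hg_meas) hF_bdd
    (hψ𝕜.integrable one_le_two), ← integral_ofReal]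
  refine integral_congr_ae (.of_forall fun y => ?_)
  simp only [RCLike.conj_ofReal, mul_assoc, RCLike.ofReal_mul, RCLike.ofReal_pow]
  exact congrArg _ (RCLike.mul_conj (g y))

end Convolution

/-- Solutions of `u' = −i(h·(u*ψ))*ψ̌` have constant `L²`-norm. -/
theorem norm_constant_of_hamiltonian_ode (ψ : SC → ℝ) (hψ : MemLp ψ 2 volume)
    (h : ℝ → SC → ℝ) (hmeas : ∀ t : ℝ, Measurable (h t))
    (hbd : ∀ t : ℝ, ∃ C : ℝ, ∀ x : SC, |h t x| ≤ C)
    (u u' : ℝ → Lp ℂ 2 (volume : Measure SC))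
    (hderiv : ∀ t : ℝ, HasDerivAt u (u' t) t)
    (heq : ∀ t : ℝ, (u' t : SC → ℂ) =ᵐ[volume] fun x =>
      -(Complex.I *
        conv (fun y => (h t y : ℂ) * conv (↑(u t)) (cplx ψ) y) (cplx fun x => ψ (-x)) x)) :
    ∀ s t : ℝ, ‖u s‖ = ‖u t‖ := by
  refine norm_eq_of_re_inner_deriv_eq_zero (𝕜 := ℂ) hderiv fun t => ?_
  obtain ⟨C, hC⟩ := hbd t
  have hinner : inner ℂ (u t) (u' t) = -(I * ∫ x, conj (u t x) *
      ∫ y, ((h t y : ℂ) * ∫ z, u t z * (ψ (y - z) : ℂ)) * ψ (y - x)) := by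
    rw [L2.inner_def, ← integral_const_mul, ← integral_neg]
    refine integral_congr_ae ((heq t).mono fun x hx => ?_)
    simp only [RCLike.inner_apply, hx, conv, cplx, neg_sub]
    ring
  have hreal := integral_conj_mul_hamiltonian_eq_ofReal (𝕜 := ℂ) (Lp.memLp (u t)) hψ
    (hmeas t).aestronglyMeasurable (.of_forall hC)
  simp only [RCLike.ofReal_eq_complex_ofReal] at hreal
  rw [hinner, hreal]
  simp
end
end

section
/- Let λ ∈ ℝ with λ ≠ 0, let c > 0, and let w : ℝ → ℂ be differentiable and f : ℝ → ℂ be such that w'(s) = λ·w(s) + f(s) for all s ∈ ℝ, |f(s)| < c for all s ∈ ℝ, and w(s) → 0 as s → +∞ and as s → −∞. Then |w(s)| ≤ √2·c/|λ| for all s ∈ ℝ. -/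
/-!
With the integrating factor `e^{-λt}` the equation becomes `(e^{-λt} w)' = e^{-λt} f`, whose norm
is dominated by the derivative of `c e^{-λt} / (-λ)`. For `λ < 0` this bounds `‖w s‖` by
`‖w a‖ + c / |λ|` for every `a ≤ s`, and letting `a → -∞` gives `‖w s‖ ≤ c / |λ|`; the case
`λ > 0` is the same after reversing time. This is sharper than the claim by the factor `√2`.
-/

open Filter Topology

section

variable {E : Type*} [NormedAddCommGroup E] [NormedSpace ℝ E] {lam c : ℝ} {w f : ℝ → E}

theorem hasDerivAt_exp_smul_of_hasDerivAt_linear {t : ℝ}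
    (hw : HasDerivAt w (lam • w t + f t) t) :
    HasDerivAt (fun t => Real.exp (-lam * t) • w t) (Real.exp (-lam * t) • f t) t := by
  have hexp := ((hasDerivAt_id' t).const_mul (-lam)).exp
  exact (hexp.smul hw).congr_deriv (by module)

theorem exp_mul_norm_le_of_hasDerivAt_linear (hlam : lam ≠ 0)
    (hw : ∀ t, HasDerivAt w (lam • w t + f t) t) (hf : ∀ t, ‖f t‖ ≤ c) {a s : ℝ} (has : a ≤ s) :
    Real.exp (-lam * s) * ‖w s‖ ≤
      Real.exp (-lam * a) * ‖w a‖ + c / -lam * (Real.exp (-lam * s) - Real.exp (-lam * a)) := by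
  have hv t := hasDerivAt_exp_smul_of_hasDerivAt_linear (hw t)
  have hB t : HasDerivAt (fun t => Real.exp (-lam * a) * ‖w a‖ +
      c / -lam * (Real.exp (-lam * t) - Real.exp (-lam * a))) (c * Real.exp (-lam * t)) t := by
    refine ((((hasDerivAt_id' t).const_mul (-lam)).exp.sub_const (Real.exp (-lam * a))).const_mul
      (c / -lam)).const_add (Real.exp (-lam * a) * ‖w a‖) |>.congr_deriv ?_
    field_simp
  have hbound := image_norm_le_of_norm_deriv_right_le_deriv_boundary
    (fun t _ => (hv t).continuousAt.continuousWithinAt) (fun t _ => (hv t).hasDerivWithinAt)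
    (B := fun t => Real.exp (-lam * a) * ‖w a‖ +
      c / -lam * (Real.exp (-lam * t) - Real.exp (-lam * a))) ?_ hB ?_ ⟨has, le_rfl⟩
  · simpa [norm_smul, abs_of_pos (Real.exp_pos _)] using hbound
  · simp [norm_smul, abs_of_pos (Real.exp_pos _)]
  · intro t _
    rw [norm_smul, Real.norm_of_nonneg (Real.exp_pos _).le, mul_comm]
    exact mul_le_mul_of_nonneg_right (hf t) (Real.exp_pos _).le

theorem norm_le_add_of_hasDerivAt_linear_of_neg (hlam : lam < 0) (hc : 0 ≤ c)
    (hw : ∀ t, HasDerivAt w (lam • w t + f t) t) (hf : ∀ t, ‖f t‖ ≤ c) {a s : ℝ} (has : a ≤ s) :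
    ‖w s‖ ≤ ‖w a‖ + c / -lam := by
  have hduhamel := exp_mul_norm_le_of_hasDerivAt_linear hlam.ne hw hf has
  have hexp_mono : Real.exp (-lam * a) ≤ Real.exp (-lam * s) := by gcongr; nlinarith
  have hdiv : 0 ≤ c / -lam := div_nonneg hc (neg_nonneg.mpr hlam.le)
  refine le_of_mul_le_mul_left ?_ (Real.exp_pos (-lam * s))
  nlinarith [norm_nonneg (w a), Real.exp_pos (-lam * a)]

theorem norm_le_of_hasDerivAt_linear_of_neg (hlam : lam < 0) (hc : 0 ≤ c)
    (hw : ∀ t, HasDerivAt w (lam • w t + f t) t) (hf : ∀ t, ‖f t‖ ≤ c)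
    (hbot : Tendsto w atBot (𝓝 0)) (s : ℝ) :
    ‖w s‖ ≤ c / -lam := by
  have hlim : Tendsto (fun a => ‖w a‖ + c / -lam) atBot (𝓝 (c / -lam)) := by
    simpa using hbot.norm.add_const (c / -lam)
  refine ge_of_tendsto hlim ?_
  filter_upwards [eventually_le_atBot s] with a has
  exact norm_le_add_of_hasDerivAt_linear_of_neg hlam hc hw hf has

theorem hasDerivAt_linear_comp_neg (hw : ∀ t, HasDerivAt w (lam • w t + f t) t) (t : ℝ) :
    HasDerivAt (fun u => w (-u)) ((-lam) • w (-t) + (-f (-t))) t := by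
  refine ((hw (-t)).scomp t (hasDerivAt_neg t)).congr_deriv ?_
  module

theorem norm_le_div_abs_of_hasDerivAt_linear (hlam : lam ≠ 0) (hc : 0 ≤ c)
    (hw : ∀ t, HasDerivAt w (lam • w t + f t) t) (hf : ∀ t, ‖f t‖ ≤ c)
    (htop : Tendsto w atTop (𝓝 0)) (hbot : Tendsto w atBot (𝓝 0)) (s : ℝ) :
    ‖w s‖ ≤ c / |lam| := by
  rcases hlam.lt_or_gt with hneg | hpos
  · simpa [abs_of_neg hneg] using norm_le_of_hasDerivAt_linear_of_neg hneg hc hw hf hbot s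
  · have hrefl := norm_le_of_hasDerivAt_linear_of_neg (neg_lt_zero.mpr hpos) hc
      (hasDerivAt_linear_comp_neg hw) (fun t => (norm_neg (f (-t))).trans_le (hf (-t)))
      (htop.comp tendsto_neg_atBot_atTop) (-s)
    simpa [abs_of_pos hpos] using hrefl

end

/-- ODE bound in the presence of small divisors: if `w' = λw + f` with `λ ∈ ℝ \ {0}`,
`|f| < c` and `w(s) → 0` as `s → ±∞`, then `|w(s)| ≤ √2·c/|λ|` everywhere. -/
theorem ode_small_divisor_bound (lam : ℝ) (hlam : lam ≠ 0) (c : ℝ) (hc : 0 < c)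
    (w f : ℝ → ℂ)
    (hw : ∀ s : ℝ, HasDerivAt w ((lam : ℂ) * w s + f s) s)
    (hf : ∀ s : ℝ, ‖f s‖ < c)
    (htop : Filter.Tendsto w Filter.atTop (nhds 0))
    (hbot : Filter.Tendsto w Filter.atBot (nhds 0)) :
    ∀ s : ℝ, ‖w s‖ ≤ Real.sqrt 2 * c / |lam| := by
  intro s
  have hw' : ∀ t, HasDerivAt w (lam • w t + f t) t := by simpa only [Complex.real_smul] using hw
  have hbound := norm_le_div_abs_of_hasDerivAt_linear hlam hc.le hw' (fun t => (hf t).le) htop hbot s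
  calc ‖w s‖ ≤ c / |lam| := hbound
    _ ≤ Real.sqrt 2 * (c / |lam|) :=
      le_mul_of_one_le_left ((norm_nonneg _).trans hbound) Real.one_lt_sqrt_two.le
    _ = Real.sqrt 2 * c / |lam| := (mul_div_assoc _ _ _).symm
end
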